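/- arXiv:2310.12408 — 4 statements merged into one kernel-verified Lean document; each statement's English description precedes it below -/
import Mathlib

section
/- If X is a chi-squared random variable with k degrees of freedom, then for all z ≥ 0, P[X ≥ k + 2√(kz) + 2z] ≤ e^{-z}. -/
open MeasureTheory ProbabilityTheory Real
open scoped ENNReal NNReal

lemma gauss_sq_exp {t : ℝ} (ht : t < 1/2) :
    Integrable (fun x => Real.exp (t * x ^ 2)) (gaussianReal 0 1) ∧
    ∫ x, Real.exp (t * x ^ 2) ∂(gaussianReal 0 1) = (Real.sqrt (1 - 2 * t))⁻¹ := by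
  have hb : 0 < 1/2 - t := by linarith
  have hpdf : ∀ x : ℝ, gaussianPDFReal 0 1 x * Real.exp (t * x ^ 2)
      = (Real.sqrt (2 * π))⁻¹ * Real.exp (-(1/2 - t) * x ^ 2) := by
    intro x
    simp only [gaussianPDFReal, NNReal.coe_one, mul_one, sub_zero]
    rw [mul_assoc, ← Real.exp_add]
    ring_nf
  have hrw : gaussianReal 0 1 = volume.withDensity
      (fun x => ((gaussianPDFReal 0 1 x).toNNReal : ℝ≥0∞)) := by
    rw [gaussianReal_of_var_ne_zero 0 one_ne_zero]
    rfl
  have hmeas : Measurable fun x => (gaussianPDFReal 0 1 x).toNNReal :=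
    (measurable_gaussianPDFReal 0 1).real_toNNReal
  have hint : Integrable (fun x : ℝ => (Real.sqrt (2 * π))⁻¹ * Real.exp (-(1/2 - t) * x ^ 2))
      volume := (integrable_exp_neg_mul_sq hb).const_mul _
  constructor
  · rw [hrw]
    rw [integrable_withDensity_iff (hmeas.coe_nnreal_ennreal)
      (Filter.Eventually.of_forall fun x => ENNReal.coe_lt_top)]
    refine hint.congr (Filter.Eventually.of_forall fun x => ?_)
    simp only [ENNReal.coe_toReal, Real.coe_toNNReal _ (gaussianPDFReal_nonneg 0 1 x)]
    rw [← hpdf x]; ring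
  · rw [hrw, integral_withDensity_eq_integral_smul hmeas]
    have heq : ∀ x : ℝ, (gaussianPDFReal 0 1 x).toNNReal • Real.exp (t * x ^ 2)
        = (Real.sqrt (2 * π))⁻¹ * Real.exp (-(1/2 - t) * x ^ 2) := by
      intro x
      rw [NNReal.smul_def, Real.coe_toNNReal _ (gaussianPDFReal_nonneg 0 1 x), smul_eq_mul, hpdf x]
    simp_rw [heq]
    rw [integral_const_mul, integral_gaussian]
    rw [← Real.sqrt_inv, ← Real.sqrt_mul (by positivity)]
    congr 1
    rw [← Real.sqrt_inv]
    congr 1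
    have h1 : π ≠ 0 := pi_ne_zero
    have h2 : (1:ℝ)/2 - t ≠ 0 := hb.ne'
    have h3 : (1:ℝ) - 2*t ≠ 0 := by intro h; apply h2; linarith
    field_simp

lemma pi_gauss_sq_exp (k : ℕ) {t : ℝ} (ht : t < 1/2) :
    Integrable (fun x : Fin k → ℝ => Real.exp (t * ∑ i, x i ^ 2))
      (Measure.pi fun _ : Fin k => gaussianReal 0 1) ∧
    ∫ x : Fin k → ℝ, Real.exp (t * ∑ i, x i ^ 2)
        ∂(Measure.pi fun _ : Fin k => gaussianReal 0 1)
      = ((Real.sqrt (1 - 2 * t))⁻¹) ^ k := by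
  letI : MeasureSpace ℝ := ⟨gaussianReal 0 1⟩
  haveI : SigmaFinite (volume : Measure ℝ) :=
    (inferInstance : SigmaFinite (gaussianReal 0 1))
  have h1 : ∀ x : Fin k → ℝ, Real.exp (t * ∑ i, x i ^ 2)
      = ∏ i, Real.exp (t * x i ^ 2) := by
    intro x
    rw [← Real.exp_sum, Finset.mul_sum]
  constructor
  · simp_rw [h1]
    exact Integrable.fintype_prod (f := fun _ : Fin k => fun y : ℝ => Real.exp (t * y ^ 2))
      (fun _ => (gauss_sq_exp ht).1)
  · simp_rw [h1]
    rw [show (Measure.pi fun _ : Fin k => gaussianReal 0 1)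
        = (volume : Measure (Fin k → ℝ)) from rfl]
    rw [integral_fintype_prod_volume_eq_pow (ι := Fin k) (fun y : ℝ => Real.exp (t * y ^ 2))]
    rw [show (∫ (x : ℝ), rexp (t * x ^ 2)) = ∫ x, Real.exp (t * x ^ 2) ∂(gaussianReal 0 1)
      from rfl, (gauss_sq_exp ht).2]
    simp

set_option maxHeartbeats 1000000 in
/-- Chi-squared tail bound: if `X` is the sum of squares of `k` i.i.d. standard
Gaussians, then `P[X ≥ k + 2√(kz) + 2z] ≤ e^{-z}`. -/
theorem chi_squared_tail_bound (k : ℕ) (z : ℝ) (hz : 0 ≤ z) :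
    ((Measure.pi fun _ : Fin k => gaussianReal 0 1)
        {x | (k : ℝ) + 2 * Real.sqrt (k * z) + 2 * z ≤ ∑ i, x i ^ 2}).toReal
      ≤ Real.exp (-z) := by
  haveI : IsProbabilityMeasure (Measure.pi fun _ : Fin k => gaussianReal 0 1) :=
    inferInstance
  rcases hz.eq_or_lt with h0 | hzpos
  · rw [← h0, neg_zero, Real.exp_zero]
    refine le_trans (ENNReal.toReal_mono (measure_ne_top _ _)
      (measure_mono (Set.subset_univ _))) ?_
    simp
  rcases Nat.eq_zero_or_pos k with rfl | hk
  · have hempty : {x : Fin 0 → ℝ |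
        ((0:ℕ) : ℝ) + 2 * Real.sqrt ((0:ℕ) * z) + 2 * z ≤ ∑ i, x i ^ 2} = ∅ := by
      ext x
      simp only [Set.mem_setOf_eq, Set.mem_empty_iff_false, iff_false, not_le,
        Nat.cast_zero, zero_mul, Real.sqrt_zero, mul_zero, zero_add,
        Finset.univ_eq_empty, Finset.sum_empty]
      linarith
    rw [hempty]
    simp [(Real.exp_pos (-z)).le]
  -- main case : k ≥ 1, z > 0
  have hk0 : (0:ℝ) < k := Nat.cast_pos.mpr hk
  have hsq : 0 ≤ Real.sqrt ((k:ℝ) * z) := Real.sqrt_nonneg _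
  set s : ℝ := (k:ℝ) + 2 * Real.sqrt (k * z) + 2 * z with hs
  have hspos : 0 < s := by rw [hs]; linarith
  set t : ℝ := (s - k) / (2 * s) with hts
  have ht0 : 0 ≤ t := div_nonneg (by rw [hs]; linarith) (by linarith)
  have htlt : t < 1/2 := by
    rw [hts, div_lt_iff₀ (by linarith)]
    linarith
  have h12t : 1 - 2 * t = (k:ℝ) / s := by
    rw [hts]
    field_simp
    ring
  have hcher := measure_ge_le_exp_mul_mgf (X := fun x : Fin k → ℝ => ∑ i, x i ^ 2)
    s ht0 (pi_gauss_sq_exp k htlt).1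
  refine hcher.trans ?_
  have hmgf : mgf (fun x : Fin k → ℝ => ∑ i, x i ^ 2)
      (Measure.pi fun _ : Fin k => gaussianReal 0 1) t
      = ((Real.sqrt (1 - 2 * t))⁻¹) ^ k := (pi_gauss_sq_exp k htlt).2
  rw [hmgf, h12t, ← Real.sqrt_inv, inv_div]
  have hts2 : -t * s = -((s - k) / 2) := by
    rw [hts]
    field_simp
  rw [hts2]
  have key : (Real.sqrt (s / k)) ^ k ≤ Real.exp (Real.sqrt ((k:ℝ) * z)) := by
    obtain ⟨a, ha⟩ : ∃ a : ℝ, a = Real.sqrt ((k:ℝ) * z) / k := ⟨_, rfl⟩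
    have ha0 : 0 ≤ a := ha ▸ div_nonneg hsq hk0.le
    have hsk : s / k = 1 + 2 * a + (2 * a) ^ 2 / 2 := by
      have hsq2 : Real.sqrt ((k:ℝ) * z) ^ 2 = (k:ℝ) * z :=
        Real.sq_sqrt (mul_nonneg hk0.le hz)
      have hak : a * k = Real.sqrt ((k:ℝ) * z) := ha ▸ div_mul_cancel₀ _ hk0.ne'
      have ha2k : a ^ 2 * (k:ℝ) = z := by
        have h := congrArg (fun y => y ^ 2) hak
        simp only [mul_pow] at h
        rw [hsq2] at h
        nlinarith [h]
      rw [div_eq_iff hk0.ne', hs]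
      clear_value s t
      linear_combination (-2:ℝ) * hak - 2 * ha2k
    have hexp : s / k ≤ Real.exp (2 * a) := by
      rw [hsk]
      exact Real.quadratic_le_exp_of_nonneg (by linarith)
    have h1 : Real.sqrt (s / k) ≤ Real.exp a := by
      have := Real.sqrt_le_sqrt hexp
      rwa [show Real.exp (2 * a) = (Real.exp a) ^ 2 by
          rw [← Real.exp_nat_mul]; norm_num,
        Real.sqrt_sq (Real.exp_pos a).le] at this
    calc (Real.sqrt (s / k)) ^ k ≤ (Real.exp a) ^ k :=
          pow_le_pow_left₀ (Real.sqrt_nonneg _) h1 k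
      _ = Real.exp ((k:ℝ) * a) := by rw [← Real.exp_nat_mul]
      _ = Real.exp (Real.sqrt ((k:ℝ) * z)) := by
          rw [ha, mul_div_cancel₀ _ hk0.ne']
  calc Real.exp (-((s - k) / 2)) * (Real.sqrt (s / k)) ^ k
      ≤ Real.exp (-((s - k) / 2)) * Real.exp (Real.sqrt ((k:ℝ) * z)) := by
        exact mul_le_mul_of_nonneg_left key (Real.exp_pos _).le
    _ = Real.exp (-z) := by
        rw [← Real.exp_add]
        congr 1
        rw [hs]
        ring
end

section
/- For a standard Gaussian g and any real z, |E[1[g > z] · g]| < 2 · (P[g > z])^{0.9}. -/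
open MeasureTheory ProbabilityTheory Real Set Filter
open scoped ENNReal NNReal

lemma tendsto_exp_neg_sq_div_two : Tendsto (fun x : ℝ => rexp (-x^2/2)) atTop (nhds 0) := by
  apply Real.tendsto_exp_atBot.comp
  apply Filter.Tendsto.atBot_div_const (by norm_num : (0:ℝ) < 2)
  exact tendsto_neg_atBot_iff.mpr (tendsto_pow_atTop (by norm_num))

lemma integrable_mul_exp : Integrable (fun x : ℝ => x * rexp (-x^2/2)) := by
  have h := integrable_rpow_mul_exp_neg_mul_sq (b := 1/2) (by norm_num) (s := 1) (by norm_num)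
  refine h.congr (ae_of_all _ fun x => ?_)
  simp only [Real.rpow_one]; ring_nf

lemma integrable_exp_sq : Integrable (fun x : ℝ => rexp (-x^2/2)) := by
  have h := integrable_exp_neg_mul_sq (b := 1/2) (by norm_num)
  refine h.congr (ae_of_all _ fun x => ?_)
  ring_nf

lemma ftc_gauss (z : ℝ) : ∫ x in Ioi z, x * rexp (-x^2/2) = rexp (-z^2/2) := by
  have hderiv : ∀ x ∈ Ici z, HasDerivAt (fun y : ℝ => -rexp (-y^2/2)) (x * rexp (-x^2/2)) x := by
    intro x _
    have h1 : HasDerivAt (fun y : ℝ => -y^2/2) (-x) x := by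
      have := ((hasDerivAt_pow 2 x).neg).div_const 2
      refine this.congr_deriv ?_
      push_cast; ring
    have := (h1.exp).neg
    refine this.congr_deriv ?_
    ring
  have h0 : Tendsto (fun y : ℝ => -rexp (-y^2/2)) atTop (nhds 0) := by
    have := tendsto_exp_neg_sq_div_two.neg
    simpa using this
  have := integral_Ioi_of_hasDerivAt_of_tendsto' hderiv integrable_mul_exp.integrableOn h0
  simpa using this

lemma tail_lower (z : ℝ) :
    rexp (-z^2/2) * (z/(1+z^2)) ≤ ∫ x in Ioi z, rexp (-x^2/2) := by
  set G : ℝ → ℝ := fun y => rexp (-y^2/2) * (y/(1+y^2)) with hG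
  set g : ℝ → ℝ := fun x => rexp (-x^2/2) * ((1 - 2*x^2 - x^4)/(1+x^2)^2) with hg
  have hne : ∀ x : ℝ, (1:ℝ) + x^2 ≠ 0 := fun x => by positivity
  have hderiv : ∀ x ∈ Ici z, HasDerivAt G (g x) x := by
    intro x _
    have h1 : HasDerivAt (fun y : ℝ => rexp (-y^2/2)) (-x * rexp (-x^2/2)) x := by
      have h0 : HasDerivAt (fun y : ℝ => -y^2/2) (-x) x := by
        have := ((hasDerivAt_pow 2 x).neg).div_const 2
        refine this.congr_deriv ?_; push_cast; ring
      have := h0.exp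
      convert this using 1; ring
    have h2 : HasDerivAt (fun y : ℝ => y/(1+y^2)) ((1*(1+x^2) - x*(2*x))/(1+x^2)^2) x := by
      have hb : HasDerivAt (fun y : ℝ => 1 + y^2) (2*x) x := by
        have := (hasDerivAt_pow 2 x).const_add 1
        refine this.congr_deriv ?_; push_cast; ring
      exact (hasDerivAt_id x).div hb (hne x)
    have := h1.mul h2
    refine this.congr_deriv ?_
    simp only [hg]
    field_simp
    ring
  have hint : Integrable g := by
    refine Integrable.mono' integrable_exp_sq ?_ (ae_of_all _ fun x => ?_)
    · apply Continuous.aestronglyMeasurable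
      fun_prop (disch := intros; positivity)
    · simp only [hg, norm_mul, Real.norm_eq_abs, abs_of_pos (exp_pos _)]
      have h2 : |(1 - 2*x^2 - x^4)/(1+x^2)^2| ≤ 1 := by
        rw [abs_div, div_le_one (by positivity)]
        rw [abs_of_pos (by positivity : (0:ℝ) < (1+x^2)^2)]
        rw [abs_le]
        constructor <;> nlinarith [sq_nonneg x, sq_nonneg (x^2)]
      calc rexp (-x^2/2) * |(1 - 2*x^2 - x^4)/(1+x^2)^2| ≤ rexp (-x^2/2) * 1 :=
            mul_le_mul_of_nonneg_left h2 (exp_pos _).le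
        _ = rexp (-x^2/2) := mul_one _
  have h0 : Tendsto G atTop (nhds 0) := by
    apply squeeze_zero_norm (a := fun x : ℝ => rexp (-x^2/2)) ?_ tendsto_exp_neg_sq_div_two
    intro x
    simp only [hG, norm_mul, Real.norm_eq_abs, abs_of_pos (exp_pos _)]
    have : |x/(1+x^2)| ≤ 1 := by
      rw [abs_div, div_le_one (by positivity), abs_of_pos (by positivity : (0:ℝ) < 1+x^2)]
      nlinarith [abs_nonneg x, sq_abs x, sq_nonneg (|x| - 1)]
    calc rexp (-x^2/2) * |x/(1+x^2)| ≤ rexp (-x^2/2) * 1 :=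
          mul_le_mul_of_nonneg_left this (exp_pos _).le
      _ = rexp (-x^2/2) := mul_one _
  have key : ∫ x in Ioi z, g x = 0 - G z :=
    integral_Ioi_of_hasDerivAt_of_tendsto' hderiv hint.integrableOn h0
  have hmono : ∫ x in Ioi z, g x ≥ ∫ x in Ioi z, -rexp (-x^2/2) := by
    apply integral_mono (integrable_exp_sq.neg.integrableOn) hint.integrableOn
    intro x
    simp only [hg, Pi.neg_apply]
    rw [neg_le, ← mul_neg]
    calc rexp (-x^2/2) * -((1 - 2*x^2 - x^4)/(1+x^2)^2) ≤ rexp (-x^2/2) * 1 := by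
          apply mul_le_mul_of_nonneg_left ?_ (exp_pos _).le
          rw [neg_div', neg_sub', div_le_one (by positivity)]
          nlinarith [sq_nonneg x, sq_nonneg (x^2)]
      _ = rexp (-x^2/2) := mul_one _
  have : -(∫ x in Ioi z, rexp (-x^2/2)) ≤ 0 - G z := by
    rw [← key] at *
    calc -(∫ x in Ioi z, rexp (-x^2/2)) = ∫ x in Ioi z, -rexp (-x^2/2) := by
          rw [integral_neg]
      _ ≤ ∫ x in Ioi z, g x := hmono
  simp only [hG] at this ⊢
  linarith

lemma I_zero : ∫ x in Ioi (0:ℝ), rexp (-x^2/2) = √(2*π)/2 := by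
  have h := integral_gaussian_Ioi (1/2)
  rw [show √(π/(1/2)) = √(2*π) by norm_num [mul_comm]] at h
  rw [← h]
  apply integral_congr_ae (ae_of_all _ fun x => ?_)
  ring_nf

lemma small_bound {z : ℝ} (hz : z ≤ 0.7) :
    √(2*π)/2 - 0.7 ≤ ∫ x in Ioi z, rexp (-x^2/2) := by
  have h1 : ∫ x in Ioi (0.7:ℝ), rexp (-x^2/2) ≤ ∫ x in Ioi z, rexp (-x^2/2) := by
    apply setIntegral_mono_set integrable_exp_sq.integrableOn
      (ae_of_all _ fun x => (exp_pos _).le)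
    exact HasSubset.Subset.eventuallyLE (Ioi_subset_Ioi hz)
  have hsplit : (∫ x in Ioc (0:ℝ) 0.7, rexp (-x^2/2)) + ∫ x in Ioi (0.7:ℝ), rexp (-x^2/2)
      = √(2*π)/2 := by
    rw [← I_zero, ← setIntegral_union (Set.Ioc_disjoint_Ioi le_rfl) measurableSet_Ioi
      integrable_exp_sq.integrableOn integrable_exp_sq.integrableOn,
      Set.Ioc_union_Ioi_eq_Ioi (by norm_num)]
  have h2 : ∫ x in Ioc (0:ℝ) 0.7, rexp (-x^2/2) ≤ 0.7 := by
    calc ∫ x in Ioc (0:ℝ) 0.7, rexp (-x^2/2) ≤ ∫ _x in Ioc (0:ℝ) 0.7, (1:ℝ) := by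
          apply setIntegral_mono_on integrable_exp_sq.integrableOn
            (integrableOn_const (by simp)) measurableSet_Ioc
          intro x _
          exact exp_le_one_iff.mpr (by nlinarith [sq_nonneg x])
      _ = 0.7 := by simp [Real.volume_Ioc]; norm_num
  linarith

lemma pdf_eq (x : ℝ) : gaussianPDFReal 0 1 x = (√(2*π))⁻¹ * rexp (-x^2/2) := by
  simp [gaussianPDFReal]

lemma P_toReal (z : ℝ) : ((gaussianReal 0 1) {x | z < x}).toReal
    = (√(2*π))⁻¹ * ∫ x in Ioi z, rexp (-x^2/2) := by
  have h := gaussianReal_apply_eq_integral 0 one_ne_zero {x : ℝ | z < x}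
  rw [h, ENNReal.toReal_ofReal (setIntegral_nonneg (by exact measurableSet_Ioi)
    (fun x _ => gaussianPDFReal_nonneg 0 1 x))]
  show ∫ x in Ioi z, gaussianPDFReal 0 1 x = _
  simp_rw [pdf_eq]
  rw [integral_const_mul _ _]

lemma E_int (z : ℝ) : ∫ x in {x : ℝ | z < x}, x ∂(gaussianReal 0 1)
    = (√(2*π))⁻¹ * rexp (-z^2/2) := by
  have hmeas : Measurable (fun x => (gaussianPDFReal 0 1 x).toNNReal) :=
    (measurable_gaussianPDFReal 0 1).real_toNNReal
  have hrw : gaussianReal 0 1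
      = volume.withDensity (fun x => ((gaussianPDFReal 0 1 x).toNNReal : ℝ≥0∞)) := by
    rw [gaussianReal_of_var_ne_zero 0 one_ne_zero]; rfl
  rw [hrw, setIntegral_withDensity_eq_setIntegral_smul hmeas _ (by exact measurableSet_Ioi)]
  have : ∀ x : ℝ, (gaussianPDFReal 0 1 x).toNNReal • x = (√(2*π))⁻¹ * (x * rexp (-x^2/2)) := by
    intro x
    rw [NNReal.smul_def, smul_eq_mul, Real.coe_toNNReal _ (gaussianPDFReal_nonneg 0 1 x), pdf_eq]
    ring
  show ∫ x in Ioi z, (gaussianPDFReal 0 1 x).toNNReal • x = _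
  simp_rw [this]
  rw [integral_const_mul _ _, ftc_gauss]

lemma sqrt_two_pi_ge : (2.5:ℝ) ≤ √(2*π) := by
  nlinarith [Real.sq_sqrt (by positivity : (0:ℝ) ≤ 2*π), Real.sqrt_nonneg (2*π),
    Real.pi_gt_d6]

/-- Gaussian tail expectation bound: for standard Gaussian `g` and any real `z`,
`|E[1[g > z] g]| < 2 (P[g > z])^{0.9}`. -/
theorem gaussian_tail_expectation_bound (z : ℝ) :
    |∫ x in {x : ℝ | z < x}, x ∂(gaussianReal 0 1)| <
      2 * ((gaussianReal 0 1) {x | z < x}).toReal ^ (0.9 : ℝ) := by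
  have hS0 : (0:ℝ) < √(2*π) := lt_of_lt_of_le (by norm_num) sqrt_two_pi_ge
  have hP1 : ((gaussianReal 0 1) {x | z < x}).toReal ≤ 1 := by
    have h := prob_le_one (μ := gaussianReal 0 1) (s := {x | z < x})
    simpa using ENNReal.toReal_mono ENNReal.one_ne_top h
  rw [E_int z, P_toReal z, abs_of_pos (by positivity)]
  set S := √(2*π) with hSdef
  set I := ∫ x in Ioi z, rexp (-x^2/2) with hIdef
  set P := S⁻¹ * I with hPdef
  rw [P_toReal z] at hP1
  rcases le_or_gt z 0.7 with hz | hz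
  · -- small case
    have hIb : S/2 - 0.7 ≤ I := small_bound hz
    have hPb : (0.22:ℝ) ≤ P := by
      have h1 : S⁻¹ * (S/2 - 0.7) ≤ P := by
        apply mul_le_mul_of_nonneg_left hIb (by positivity)
      have h2 : S⁻¹ * (S/2 - 0.7) = 1/2 - 0.7 * S⁻¹ := by
        have hinv : S⁻¹ * S = 1 := inv_mul_cancel₀ hS0.ne'
        linear_combination hinv / 2
      have h3 : S⁻¹ ≤ 0.4 := by
        rw [inv_le_comm₀ (by positivity) (by norm_num)]
        calc (0.4:ℝ)⁻¹ = 2.5 := by norm_num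
          _ ≤ S := sqrt_two_pi_ge
      nlinarith
    have hP0 : (0:ℝ) < P := lt_of_lt_of_le (by norm_num) hPb
    have hPr : P ≤ P ^ (0.9:ℝ) := by
      have := Real.rpow_le_rpow_of_exponent_ge hP0 hP1 (by norm_num : (0.9:ℝ) ≤ 1)
      rwa [Real.rpow_one] at this
    have hE : S⁻¹ * rexp (-z^2/2) ≤ 0.4 := by
      have h3 : S⁻¹ ≤ 0.4 := by
        rw [inv_le_comm₀ (by positivity) (by norm_num)]
        calc (0.4:ℝ)⁻¹ = 2.5 := by norm_num
          _ ≤ S := sqrt_two_pi_ge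
      have h4 : rexp (-z^2/2) ≤ 1 := exp_le_one_iff.mpr (by nlinarith [sq_nonneg z])
      calc S⁻¹ * rexp (-z^2/2) ≤ S⁻¹ * 1 :=
            mul_le_mul_of_nonneg_left h4 (by positivity)
        _ = S⁻¹ := mul_one _
        _ ≤ 0.4 := h3
    calc S⁻¹ * rexp (-z^2/2) ≤ 0.4 := hE
      _ < 2 * 0.22 := by norm_num
      _ ≤ 2 * P := by linarith
      _ ≤ 2 * P ^ (0.9:ℝ) := by linarith
  · -- tail case
    have hz7 : (0.7:ℝ) ≤ z := hz.le
    have hz0 : (0:ℝ) < z := by linarith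
    set E := S⁻¹ * rexp (-z^2/2) with hEdef
    set w := z / (1+z^2) with hwdef
    have hw0 : 0 < w := by positivity
    have hE0 : 0 < E := by positivity
    have hLP : E * w ≤ P := by
      have h1 : rexp (-z^2/2) * w ≤ I := tail_lower z
      calc E * w = S⁻¹ * (rexp (-z^2/2) * w) := by ring
        _ ≤ S⁻¹ * I := mul_le_mul_of_nonneg_left h1 (by positivity)
    have hEw0 : 0 < E * w := mul_pos hE0 hw0
    -- core inequality : E < 2 * (E*w)^{0.9}
    have hcore : E < 2 * (E * w) ^ (0.9:ℝ) := by
      have hpow10 : (2 * (E * w) ^ (0.9:ℝ)) ^ (10:ℕ) = 1024 * (E*w)^(9:ℕ) := by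
        rw [mul_pow]
        congr 1
        · norm_num
        · rw [← Real.rpow_natCast ((E*w) ^ (0.9:ℝ)) 10, ← Real.rpow_mul hEw0.le,
            ← Real.rpow_natCast (E*w) 9]
          norm_num
      have hmain : E ^ (10:ℕ) < 1024 * (E*w)^(9:ℕ) := by
        -- reduce to E < 1024 * w^9
        have hkey : E < 1024 * w^9 := by
          -- exp bound
          have hexp9 : (1 + z^2/18)^9 ≤ rexp (z^2/2) := by
            have h1 : (1:ℝ) + z^2/18 ≤ rexp (z^2/18) := by
              have := Real.add_one_le_exp (z^2/18); linarith
            calc (1 + z^2/18)^9 ≤ (rexp (z^2/18))^9 :=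
                  pow_le_pow_left₀ (by positivity) h1 9
              _ = rexp (9 * (z^2/18)) := (Real.exp_nat_mul _ 9).symm
              _ = rexp (z^2/2) := by ring_nf
          -- cubic
          have hcubic : 1 + z^2 < 2.39 * (z + z^3/18) := by
            nlinarith [sq_nonneg (z - 3), sq_nonneg (z - 2), sq_nonneg (z*3 - 2),
              mul_nonneg (sub_nonneg.2 hz7) (sq_nonneg (z - 3)),
              mul_nonneg (sub_nonneg.2 hz7) (sq_nonneg (z - 2))]
          have hchain : (1+z^2)^9 < 1024 * S * z^9 * rexp (z^2/2) := by
            calc (1+z^2)^9 < (2.39 * (z + z^3/18))^9 :=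
                  pow_lt_pow_left₀ hcubic (by positivity) (by norm_num)
              _ = (2.39:ℝ)^9 * (z * (1 + z^2/18))^9 := by ring
              _ ≤ 2560 * (z * (1 + z^2/18))^9 := by
                  apply mul_le_mul_of_nonneg_right (by norm_num) (by positivity)
              _ = 2560 * z^9 * (1 + z^2/18)^9 := by ring
              _ ≤ 2560 * z^9 * rexp (z^2/2) := by
                  apply mul_le_mul_of_nonneg_left hexp9 (by positivity)
              _ ≤ 1024 * S * z^9 * rexp (z^2/2) := by
                  have : (2560:ℝ) ≤ 1024 * S := by nlinarith [sqrt_two_pi_ge]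
                  have h9 : (0:ℝ) ≤ z^9 * rexp (z^2/2) := by positivity
                  nlinarith
          have hfin : rexp (-z^2/2) * (1+z^2)^9 < 1024 * S * z^9 := by
            have hexp1 : rexp (-z^2/2) * rexp (z^2/2) = 1 := by
              rw [← Real.exp_add]; ring_nf; exact Real.exp_zero
            calc rexp (-z^2/2) * (1+z^2)^9
                < rexp (-z^2/2) * (1024 * S * z^9 * rexp (z^2/2)) :=
                  mul_lt_mul_of_pos_left hchain (exp_pos _)
              _ = 1024 * S * z^9 * (rexp (-z^2/2) * rexp (z^2/2)) := by ring
              _ = 1024 * S * z^9 := by rw [hexp1, mul_one]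
          -- conclude
          have h2 : E * (1+z^2)^9 < 1024 * z^9 := by
            have := mul_lt_mul_of_pos_left hfin (inv_pos.mpr hS0)
            calc E * (1+z^2)^9 = S⁻¹ * (rexp (-z^2/2) * (1+z^2)^9) := by
                  rw [hEdef]; ring
              _ < S⁻¹ * (1024 * S * z^9) := this
              _ = 1024 * z^9 * (S⁻¹ * S) := by ring
              _ = 1024 * z^9 := by rw [inv_mul_cancel₀ hS0.ne', mul_one]
          rw [hwdef, div_pow, ← mul_div_assoc, lt_div_iff₀ (by positivity)]
          linarith
        calc E ^ (10:ℕ) = E^(9:ℕ) * E := by ring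
          _ < E^(9:ℕ) * (1024 * w^9) :=
              mul_lt_mul_of_pos_left hkey (pow_pos hE0 9)
          _ = 1024 * (E*w)^(9:ℕ) := by ring
      have := hmain
      rw [← hpow10] at this
      exact lt_of_pow_lt_pow_left₀ 10 (by positivity) this
    -- finish
    have hrpow : (E * w) ^ (0.9:ℝ) ≤ P ^ (0.9:ℝ) :=
      Real.rpow_le_rpow hEw0.le hLP (by norm_num)
    calc E < 2 * (E * w) ^ (0.9:ℝ) := hcore
      _ ≤ 2 * P ^ (0.9:ℝ) := by linarith
end

section
/- For any p ∈ (0,1), the absolute value of the integral from -∞ to √2·erf⁻¹(2p−1) of x·e^{-x²/2}/√(2π) dx is strictly less than 2p^{0.9}. -/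
open MeasureTheory Real

/-- The error function `erf x = (2/√π) ∫₀ˣ e^{-t²} dt`. -/
noncomputable def erf (x : ℝ) : ℝ :=
  (2 / Real.sqrt Real.pi) * ∫ t in (0:ℝ)..x, Real.exp (-t ^ 2)

/-- The inverse error function. -/
noncomputable def erfInv : ℝ → ℝ := Function.invFun erf

open Set Filter

lemma gauss_integrable : Integrable (fun t : ℝ => Real.exp (-t ^ 2)) := by
  simpa using integrable_exp_neg_mul_sq (one_pos)

lemma gauss_ii (a b : ℝ) : IntervalIntegrable (fun t : ℝ => Real.exp (-t ^ 2)) volume a b :=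
  gauss_integrable.intervalIntegrable

lemma erf_strictMono : StrictMono erf := by
  intro a b hab
  have h : (0:ℝ) < ∫ t in a..b, Real.exp (-t ^ 2) :=
    intervalIntegral.intervalIntegral_pos_of_pos (gauss_ii a b) (fun x => Real.exp_pos _) hab
  have h2 : (∫ t in (0:ℝ)..b, Real.exp (-t ^ 2)) = (∫ t in (0:ℝ)..a, Real.exp (-t ^ 2)) + ∫ t in a..b, Real.exp (-t ^ 2) :=
    (intervalIntegral.integral_add_adjacent_intervals (gauss_ii 0 a) (gauss_ii a b)).symm
  have hc : 0 < 2 / Real.sqrt Real.pi := by positivity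
  unfold erf
  rw [h2]
  nlinarith

lemma erf_tendsto_atTop : Tendsto erf atTop (nhds 1) := by
  have h : Tendsto (fun x => ∫ t in (0:ℝ)..x, Real.exp (-t ^ 2)) atTop
      (nhds (∫ t in Ioi (0:ℝ), Real.exp (-t ^ 2))) :=
    intervalIntegral_tendsto_integral_Ioi 0 gauss_integrable.integrableOn tendsto_id
  have hval : (∫ t in Ioi (0:ℝ), Real.exp (-t ^ 2)) = Real.sqrt Real.pi / 2 := by
    simpa using integral_gaussian_Ioi 1
  have h2 := h.const_mul (2 / Real.sqrt Real.pi)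
  rw [hval] at h2
  have hπ : Real.sqrt Real.pi ≠ 0 := by positivity
  have : 2 / Real.sqrt Real.pi * (Real.sqrt Real.pi / 2) = 1 := by field_simp
  rw [this] at h2
  exact h2

lemma erf_neg (x : ℝ) : erf (-x) = - erf x := by
  unfold erf
  have h := intervalIntegral.integral_comp_neg (a := x) (b := 0) (fun t => Real.exp (-t ^ 2))
  simp only [neg_zero, neg_neg, neg_sq] at h
  have : (∫ t in (0:ℝ)..(-x), Real.exp (-t ^ 2)) = - ∫ t in (0:ℝ)..x, Real.exp (-t ^ 2) := by
    rw [← h, intervalIntegral.integral_symm]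
  rw [this]; ring

lemma erf_tendsto_atBot : Tendsto erf atBot (nhds (-1)) := by
  have := (erf_tendsto_atTop).neg
  have h2 : Tendsto (fun x => - erf (-x)) atBot (nhds (-1)) := by
    have : Tendsto (fun x : ℝ => -x) atBot atTop := tendsto_neg_atBot_atTop
    simpa using (erf_tendsto_atTop.comp this).neg
  refine h2.congr (fun x => ?_)
  rw [erf_neg]; ring

lemma erf_continuous : Continuous erf := by
  unfold erf
  exact continuous_const.mul (intervalIntegral.continuous_primitive (fun a b => gauss_ii a b) 0)

lemma erf_erfInv {y : ℝ} (hy : y ∈ Set.Ioo (-1:ℝ) 1) : erf (erfInv y) = y := by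
  have h1 : ∃ x₁ : ℝ, y < erf x₁ := by
    have := (erf_tendsto_atTop.eventually (eventually_gt_nhds hy.2)).exists
    obtain ⟨x, hx⟩ := this; exact ⟨x, hx⟩
  have h0 : ∃ x₀ : ℝ, erf x₀ < y := by
    have := (erf_tendsto_atBot.eventually (eventually_lt_nhds hy.1)).exists
    obtain ⟨x, hx⟩ := this; exact ⟨x, hx⟩
  obtain ⟨x₁, hx₁⟩ := h1
  obtain ⟨x₀, hx₀⟩ := h0
  have hle : x₀ ≤ x₁ := by
    by_contra h
    push_neg at h
    exact absurd (erf_strictMono h) (by linarith)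
  have : y ∈ Set.Icc (erf x₀) (erf x₁) := ⟨hx₀.le, hx₁.le⟩
  obtain ⟨z, _, hz⟩ := intermediate_value_Icc hle erf_continuous.continuousOn this
  exact Function.invFun_eq ⟨z, hz⟩

lemma key_integral (a : ℝ) :
    (∫ x in Set.Iio a, x * Real.exp (-x ^ 2 / 2) / Real.sqrt (2 * Real.pi))
      = - Real.exp (-a ^ 2 / 2) / Real.sqrt (2 * Real.pi) := by
  have hint : IntegrableOn (fun x : ℝ => x * Real.exp (-x ^ 2 / 2)) (Set.Iic a) := by
    have := (integrable_mul_exp_neg_mul_sq (b := (1:ℝ)/2) (by norm_num)).integrableOn (s := Set.Iic a)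
    refine this.congr_fun (fun x _ => by ring_nf) measurableSet_Iic
  have hderiv : ∀ x ∈ Set.Iio a, HasDerivAt (fun x : ℝ => - Real.exp (-x ^ 2 / 2))
      (x * Real.exp (-x ^ 2 / 2)) x := by
    intro x _
    have h1 : HasDerivAt (fun x : ℝ => -x ^ 2 / 2) (-x) x := by
      have h0 := ((hasDerivAt_pow 2 x).neg).div_const 2
      exact h0.congr_deriv (by simp; ring)
    have h2 := (h1.exp).neg
    exact h2.congr_deriv (by ring)
  have htend : Tendsto (fun x : ℝ => - Real.exp (-x ^ 2 / 2)) atBot (nhds 0) := by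
    have hsq : Tendsto (fun x : ℝ => x ^ 2) atBot atTop := by
      have := (tendsto_pow_atTop (α := ℝ) (n := 2) (by norm_num)).comp tendsto_neg_atBot_atTop
      refine this.congr (fun x => ?_)
      simp [neg_pow]
    have h1 : Tendsto (fun x : ℝ => -x ^ 2 / 2) atBot atBot :=
      ((tendsto_neg_atTop_atBot.comp hsq).atBot_div_const (by norm_num))
    have h2 := (Real.tendsto_exp_atBot.comp h1).neg
    simpa using h2
  have hIic : (∫ x in Set.Iic a, x * Real.exp (-x ^ 2 / 2)) = - Real.exp (-a ^ 2 / 2) := by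
    have := integral_Iic_of_hasDerivAt_of_tendsto
      (f := fun x : ℝ => - Real.exp (-x ^ 2 / 2)) (a := a) (m := 0)
      (Continuous.continuousWithinAt (by continuity)) hderiv hint htend
    simpa using this
  rw [← MeasureTheory.integral_Iic_eq_integral_Iio] at *
  rw [show (fun x : ℝ => x * Real.exp (-x ^ 2 / 2) / Real.sqrt (2 * Real.pi)) = fun x : ℝ => (x * Real.exp (-x ^ 2 / 2)) / Real.sqrt (2 * Real.pi) from rfl]
  rw [MeasureTheory.integral_div, hIic, neg_div]

lemma mills (r : ℝ) (hr : 0 < r) :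
    r * Real.exp (-r ^ 2) / (1 + 2 * r ^ 2) ≤ ∫ x in Set.Ioi r, Real.exp (-x ^ 2) := by
  set K : ℝ → ℝ := fun x => x * Real.exp (-x ^ 2) / (1 + 2 * x ^ 2) with hK
  set K' : ℝ → ℝ := fun x => Real.exp (-x ^ 2) * (2 - (1 + 2 * x ^ 2) ^ 2) / (1 + 2 * x ^ 2) ^ 2
    with hK'
  have hv : ∀ x : ℝ, (0:ℝ) < 1 + 2 * x ^ 2 := fun x => by positivity
  have hderiv : ∀ x : ℝ, HasDerivAt K (K' x) x := by
    intro x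
    have h1 : HasDerivAt (fun x : ℝ => -x ^ 2) (-(2 * x)) x := by
      have h0 := (hasDerivAt_pow 2 x).neg
      exact h0.congr_deriv (by simp)
    have h2 := (hasDerivAt_id x).mul h1.exp
    have h3 := ((hasDerivAt_pow 2 x).const_mul (2:ℝ)).const_add (1:ℝ)
    have h4 := h2.div h3 (ne_of_gt (hv x))
    refine h4.congr_deriv ?_
    simp only [Pi.mul_apply, id_eq, pow_one, Nat.cast_ofNat]
    rw [hK', div_eq_div_iff (by positivity) (by positivity)]
    ring
  have hKtend : Tendsto K atTop (nhds 0) := by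
    have hb : ∀ᶠ x in atTop, |K x| ≤ Real.exp (-x ^ 2) := by
      filter_upwards [eventually_ge_atTop (1:ℝ)] with x hx
      rw [abs_of_nonneg (by positivity)]
      rw [hK]
      rw [div_le_iff₀ (hv x)]
      nlinarith [Real.exp_pos (-x^2), sq_nonneg (2*x-1), mul_pos (Real.exp_pos (-x^2)) (mul_pos (by nlinarith [sq_nonneg (2*x-1)] : (0:ℝ) < 1 + 2*x^2 - x) (hv x))]
    have hexp : Tendsto (fun x : ℝ => Real.exp (-x ^ 2)) atTop (nhds 0) := by
      apply Real.tendsto_exp_atBot.comp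
      have hsq : Tendsto (fun x : ℝ => x ^ 2) atTop atTop := tendsto_pow_atTop (by norm_num)
      exact tendsto_neg_atTop_atBot.comp hsq
    have : Tendsto (fun x => |K x|) atTop (nhds 0) := by
      apply squeeze_zero' (by filter_upwards with x; positivity) hb hexp
    exact (tendsto_zero_iff_abs_tendsto_zero _).mpr this
  have hK'bound : ∀ x : ℝ, |K' x| ≤ Real.exp (-x ^ 2) := by
    intro x
    rw [hK', abs_div, abs_mul, abs_of_nonneg (Real.exp_pos _).le, abs_of_nonneg (by positivity : (0:ℝ) ≤ (1 + 2 * x ^ 2) ^ 2)]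
    rw [div_le_iff₀ (by positivity)]
    have h1 : |2 - (1 + 2 * x ^ 2) ^ 2| ≤ (1 + 2 * x ^ 2) ^ 2 := by
      rw [abs_le]
      constructor <;> nlinarith [sq_nonneg (x^2), sq_nonneg x]
    nlinarith [Real.exp_pos (-x^2), abs_nonneg (2 - (1 + 2 * x ^ 2) ^ 2)]
  have hK'int : IntegrableOn K' (Set.Ioi r) := by
    have hg : IntegrableOn (fun x : ℝ => Real.exp (-x ^ 2)) (Set.Ioi r) :=
      gauss_integrable.integrableOn
    have hcont : Continuous K' := by
      rw [hK']
      exact ((Real.continuous_exp.comp (continuous_pow 2).neg).mul (by continuity)).div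
        (by continuity) (fun x => by positivity)
    refine Integrable.mono hg hcont.aestronglyMeasurable ?_
    · filter_upwards with x
      rw [Real.norm_eq_abs, Real.norm_eq_abs, abs_of_nonneg (Real.exp_pos _).le]
      exact hK'bound x
  have hFTC : (∫ x in Set.Ioi r, K' x) = 0 - K r :=
    integral_Ioi_of_hasDerivAt_of_tendsto' (fun x _ => hderiv x) hK'int hKtend
  have hmono : (∫ x in Set.Ioi r, (- K' x)) ≤ ∫ x in Set.Ioi r, Real.exp (-x ^ 2) := by
    apply setIntegral_mono_on hK'int.neg gauss_integrable.integrableOn measurableSet_Ioi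
    intro x _
    have := (abs_le.mp (hK'bound x)).1
    simp only [Pi.neg_apply]
    linarith
  rw [integral_neg, hFTC] at hmono
  simpa using hmono

lemma one_sub_erf (r : ℝ) (hr : 0 ≤ r) :
    1 - erf r = (2 / Real.sqrt Real.pi) * ∫ x in Set.Ioi r, Real.exp (-x ^ 2) := by
  have hsplit : (∫ x in Set.Ioi (0:ℝ), Real.exp (-x ^ 2))
      = (∫ x in Set.Ioc 0 r, Real.exp (-x ^ 2)) + ∫ x in Set.Ioi r, Real.exp (-x ^ 2) := by
    rw [← setIntegral_union (Set.Ioc_disjoint_Ioi le_rfl) measurableSet_Ioi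
      gauss_integrable.integrableOn gauss_integrable.integrableOn,
      Set.Ioc_union_Ioi_eq_Ioi hr]
  have hval : (∫ x in Set.Ioi (0:ℝ), Real.exp (-x ^ 2)) = Real.sqrt Real.pi / 2 := by
    simpa using integral_gaussian_Ioi 1
  have hioc : (∫ t in (0:ℝ)..r, Real.exp (-t ^ 2)) = ∫ x in Set.Ioc 0 r, Real.exp (-x ^ 2) :=
    intervalIntegral.integral_of_le hr
  have hπ : Real.sqrt Real.pi > 0 := Real.sqrt_pos.mpr Real.pi_pos
  unfold erf
  rw [hioc]
  have : (∫ x in Set.Ioc 0 r, Real.exp (-x ^ 2)) = Real.sqrt Real.pi / 2 - ∫ x in Set.Ioi r, Real.exp (-x ^ 2) := by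
    rw [← hval, hsplit]; ring
  rw [this]
  field_simp
  ring

lemma aux_rpow {c q : ℝ} (hc : 0 ≤ c) (hq : 0 ≤ q) (h : c ^ 10 < q ^ 9) : c < q ^ (0.9:ℝ) := by
  have h1 : c = (c ^ (10:ℕ)) ^ ((1:ℝ)/10) := by
    rw [← Real.rpow_natCast c 10, ← Real.rpow_mul hc]; norm_num
  have h2 : q ^ (0.9:ℝ) = (q ^ (9:ℕ)) ^ ((1:ℝ)/10) := by
    rw [← Real.rpow_natCast q 9, ← Real.rpow_mul hq]; norm_num
  rw [h1, h2]
  exact Real.rpow_lt_rpow (by positivity) h (by norm_num)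

lemma erf_le_lin (c : ℝ) (hc : 0 ≤ c) : erf c ≤ 2 * c / Real.sqrt Real.pi := by
  have h : (∫ t in (0:ℝ)..c, Real.exp (-t ^ 2)) ≤ ∫ t in (0:ℝ)..c, (1:ℝ) := by
    apply intervalIntegral.integral_mono_on hc (gauss_ii 0 c) intervalIntegrable_const
    intro t _
    calc Real.exp (-t ^ 2) ≤ Real.exp 0 := Real.exp_le_exp.mpr (by nlinarith [sq_nonneg t])
    _ = 1 := Real.exp_zero
  have h2 : (∫ t in (0:ℝ)..c, (1:ℝ)) = c := by simp
  have hπ : (0:ℝ) < Real.sqrt Real.pi := Real.sqrt_pos.mpr Real.pi_pos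
  unfold erf
  rw [div_mul_eq_mul_div, div_le_div_iff₀ hπ hπ]
  nlinarith [h, h2]

lemma poly_bound (r : ℝ) (hr : 0.45 ≤ r) : 1 + 2 * r ^ 2 < 3.38 * r * Real.exp (r ^ 2 / 9) := by
  have h1 : 1 + r ^ 2 / 27 ≤ Real.exp (r ^ 2 / 27) := by
    linarith [Real.add_one_le_exp (r ^ 2 / 27)]
  have h2 : Real.exp (r ^ 2 / 9) = (Real.exp (r ^ 2 / 27)) ^ 3 := by
    rw [← Real.exp_nat_mul]
    push_cast; ring_nf
  have h3 : (1 + r ^ 2 / 27) ^ 3 ≤ Real.exp (r ^ 2 / 9) := by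
    rw [h2]
    exact pow_le_pow_left₀ (by positivity) h1 3
  have h4 : 3.38 * r * (1 + r ^ 2 / 27) ^ 3 ≤ 3.38 * r * Real.exp (r ^ 2 / 9) := by
    apply mul_le_mul_of_nonneg_left h3 (by linarith)
  have h5 : 1 + 2 * r ^ 2 < 3.38 * r * (1 + r ^ 2 / 27) ^ 3 := by
    nlinarith [sq_nonneg (r - 1.7), sq_nonneg (r - 0.45), sq_nonneg r, sq_nonneg (r^2 - 3), sq_nonneg (r^3 - 2)]
  linarith

set_option maxHeartbeats 1000000 in
/-- For any `p ∈ (0,1)`, the absolute value of the integral of the standard Gaussian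
moment density from `-∞` to the `p`-quantile `√2 · erf⁻¹(2p−1)` is less than `2 p^{0.9}`. -/
theorem gaussian_quantile_integral_bound (p : ℝ) (hp : p ∈ Set.Ioo (0:ℝ) 1) :
    |∫ x in Set.Iio (Real.sqrt 2 * erfInv (2 * p - 1)),
        x * Real.exp (-x ^ 2 / 2) / Real.sqrt (2 * Real.pi)| < 2 * p ^ (0.9 : ℝ) := by
  obtain ⟨hp0, hp1⟩ := hp
  have hy : (2 * p - 1) ∈ Set.Ioo (-1:ℝ) 1 := ⟨by linarith, by linarith⟩
  set s := erfInv (2 * p - 1) with hs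
  have herf : erf s = 2 * p - 1 := erf_erfInv hy
  have hsq2 : (Real.sqrt 2 * s) ^ 2 / 2 = s ^ 2 := by
    rw [mul_pow, Real.sq_sqrt (by norm_num : (0:ℝ) ≤ 2)]; ring
  have hs2π : (2.5:ℝ) ≤ Real.sqrt (2 * Real.pi) := by
    rw [show (2.5:ℝ) = Real.sqrt 6.25 by
      rw [show (6.25:ℝ) = 2.5 ^ 2 by norm_num, Real.sqrt_sq (by norm_num)]]
    exact Real.sqrt_le_sqrt (by nlinarith [Real.pi_gt_d6])
  have hs2πpos : (0:ℝ) < Real.sqrt (2 * Real.pi) := by linarith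
  have hπl : (1.772:ℝ) ≤ Real.sqrt Real.pi := by
    rw [show (1.772:ℝ) = Real.sqrt (1.772 ^ 2) by rw [Real.sqrt_sq (by norm_num)]]
    exact Real.sqrt_le_sqrt (by nlinarith [Real.pi_gt_d6])
  have hπu : Real.sqrt Real.pi ≤ 1.77246 := by
    rw [show (1.77246:ℝ) = Real.sqrt (1.77246 ^ 2) by rw [Real.sqrt_sq (by norm_num)]]
    exact Real.sqrt_le_sqrt (by nlinarith [Real.pi_lt_d6])
  have hπpos : (0:ℝ) < Real.sqrt Real.pi := by linarith
  rw [key_integral, abs_div, abs_neg, abs_of_pos (Real.exp_pos _),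
    abs_of_pos hs2πpos]
  have hexps : Real.exp (-(Real.sqrt 2 * s) ^ 2 / 2) = Real.exp (-s ^ 2) := by
    congr 1
    rw [neg_div, hsq2]
  rw [hexps]
  by_cases hcase : -0.45 ≤ s
  · -- easy case : p is bounded below by a constant
    have h1 : erf (-0.45) ≤ erf s := erf_strictMono.monotone hcase
    have h2 : erf 0.45 ≤ 2 * 0.45 / Real.sqrt Real.pi := erf_le_lin 0.45 (by norm_num)
    have h3 : 2 * (0.45:ℝ) / Real.sqrt Real.pi ≤ 0.9 / 1.772 := by
      rw [div_le_div_iff₀ hπpos (by norm_num)]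
      nlinarith
    have h4 : erf (-0.45) = - erf 0.45 := by
      rw [show (-0.45:ℝ) = -(0.45:ℝ) by norm_num, erf_neg]
    have hplow : (0.245:ℝ) ≤ p := by
      rw [h4] at h1
      nlinarith
    have hlhs : Real.exp (-s ^ 2) / Real.sqrt (2 * Real.pi) ≤ 0.4 := by
      have he : Real.exp (-s ^ 2) ≤ 1 := by
        rw [show (1:ℝ) = Real.exp 0 by simp]
        exact Real.exp_le_exp.mpr (by nlinarith [sq_nonneg s])
      rw [div_le_iff₀ hs2πpos]
      nlinarith
    have : (0.4:ℝ) < 2 * p ^ (0.9:ℝ) := by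
      have := aux_rpow (c := 0.2) (q := p) (by norm_num) (by linarith)
        (by nlinarith [pow_le_pow_left₀ (by norm_num : (0:ℝ) ≤ 0.245) hplow 9])
      linarith
    linarith
  · -- tail case
    push_neg at hcase
    set r : ℝ := -s with hr
    have hr45 : (0.45:ℝ) ≤ r := by rw [hr]; linarith
    have hrpos : (0:ℝ) < r := by linarith
    have herfr : erf r = 1 - 2 * p := by rw [hr, erf_neg, herf]; ring
    have htail : 1 - erf r = (2 / Real.sqrt Real.pi) * ∫ x in Set.Ioi r, Real.exp (-x ^ 2) :=
      one_sub_erf r hrpos.le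
    have hMills := mills r hrpos
    set q : ℝ := r * Real.exp (-r ^ 2) / ((1 + 2 * r ^ 2) * Real.sqrt Real.pi) with hq
    have hqpos : 0 < q := by rw [hq]; positivity
    have hqp : q ≤ p := by
      have h1 : 2 * p = (2 / Real.sqrt Real.pi) * ∫ x in Set.Ioi r, Real.exp (-x ^ 2) := by
        rw [← htail, herfr]; ring
      have h2 : (2 / Real.sqrt Real.pi) * (r * Real.exp (-r ^ 2) / (1 + 2 * r ^ 2))
          ≤ (2 / Real.sqrt Real.pi) * ∫ x in Set.Ioi r, Real.exp (-x ^ 2) :=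
        mul_le_mul_of_nonneg_left hMills (by positivity)
      rw [← h1] at h2
      have hv : (0:ℝ) < 1 + 2 * r ^ 2 := by positivity
      have hq2 : q = (r * Real.exp (-r ^ 2) / (1 + 2 * r ^ 2)) / Real.sqrt Real.pi := by
        rw [hq]; field_simp
      have h3 : (2 / Real.sqrt Real.pi) * (r * Real.exp (-r ^ 2) / (1 + 2 * r ^ 2))
          = 2 * ((r * Real.exp (-r ^ 2) / (1 + 2 * r ^ 2)) / Real.sqrt Real.pi) := by
        ring
      rw [h3] at h2
      rw [hq2]
      linarith
    have hE : Real.exp (-s ^ 2) = Real.exp (-r ^ 2) := by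
      congr 1; rw [hr]; ring
    rw [hE]
    set E : ℝ := Real.exp (-r ^ 2) with hEdef
    have hEpos : 0 < E := Real.exp_pos _
    set v : ℝ := 1 + 2 * r ^ 2 with hvdef
    have hvpos : (0:ℝ) < v := by positivity
    set sπ : ℝ := Real.sqrt Real.pi with hsπ
    set s2π : ℝ := Real.sqrt (2 * Real.pi) with hs2πdef
    have hEE : E * Real.exp (r ^ 2) = 1 := by
      rw [hEdef, ← Real.exp_add]; simp
    have hpoly := poly_bound r hr45
    have hv9 : v ^ 9 < 3.38 ^ 9 * r ^ 9 * Real.exp (r ^ 2) := by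
      have h1 : v ^ 9 < (3.38 * r * Real.exp (r ^ 2 / 9)) ^ 9 :=
        pow_lt_pow_left₀ hpoly hvpos.le (by norm_num)
      have h2 : (Real.exp (r ^ 2 / 9)) ^ 9 = Real.exp (r ^ 2) := by
        rw [← Real.exp_nat_mul]; congr 1; push_cast; ring
      calc v ^ 9 < (3.38 * r * Real.exp (r ^ 2 / 9)) ^ 9 := h1
        _ = 3.38 ^ 9 * r ^ 9 * (Real.exp (r ^ 2 / 9)) ^ 9 := by ring
        _ = 3.38 ^ 9 * r ^ 9 * Real.exp (r ^ 2) := by rw [h2]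
    have step2 : E * v ^ 9 < 3.38 ^ 9 * r ^ 9 := by
      calc E * v ^ 9 < E * (3.38 ^ 9 * r ^ 9 * Real.exp (r ^ 2)) :=
            mul_lt_mul_of_pos_left hv9 hEpos
        _ = 3.38 ^ 9 * r ^ 9 * (E * Real.exp (r ^ 2)) := by ring
        _ = 3.38 ^ 9 * r ^ 9 := by rw [hEE]; ring
    have hnum : 3.38 ^ 9 * sπ ≤ 2 ^ 15 * Real.pi := by
      have h338 : (3.38:ℝ) ^ 9 ≤ 57578 := by norm_num
      have hsπnn : (0:ℝ) ≤ sπ := hπpos.le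
      calc (3.38:ℝ) ^ 9 * sπ ≤ 57578 * sπ := mul_le_mul_of_nonneg_right h338 hsπnn
        _ ≤ 57578 * 1.77246 := by linarith
        _ ≤ 2 ^ 15 * 3.141592 := by norm_num
        _ ≤ 2 ^ 15 * Real.pi := mul_le_mul_of_nonneg_left Real.pi_gt_d6.le (by norm_num)
    have hs2π10 : s2π ^ 10 = (2 * Real.pi) ^ 5 := by
      rw [hs2πdef, show (10:ℕ) = 2 * 5 by norm_num, pow_mul,
        Real.sq_sqrt (by positivity : (0:ℝ) ≤ 2 * Real.pi)]
    have hsπ9 : sπ ^ 9 = Real.pi ^ 4 * sπ := by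
      rw [hsπ, show (9:ℕ) = 2 * 4 + 1 by norm_num, pow_succ, pow_mul,
        Real.sq_sqrt Real.pi_pos.le]
    have hkey : (E / s2π / 2) ^ 10 < q ^ 9 := by
      have hq9 : q ^ 9 = r ^ 9 * E ^ 9 / (v ^ 9 * (Real.pi ^ 4 * sπ)) := by
        rw [hq, div_pow, mul_pow, mul_pow, hsπ9]
      have hc10 : (E / s2π / 2) ^ 10 = E ^ 10 / ((2 * Real.pi) ^ 5 * 2 ^ 10) := by
        rw [div_pow, div_pow, hs2π10, div_div]
      rw [hq9, hc10, div_lt_div_iff₀ (by positivity) (by positivity)]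
      have hfinal : E ^ 10 * (v ^ 9 * (Real.pi ^ 4 * sπ))
          = (E * v ^ 9) * (E ^ 9 * (Real.pi ^ 4 * sπ)) := by ring
      rw [hfinal]
      calc (E * v ^ 9) * (E ^ 9 * (Real.pi ^ 4 * sπ))
          < (3.38 ^ 9 * r ^ 9) * (E ^ 9 * (Real.pi ^ 4 * sπ)) := by
            apply mul_lt_mul_of_pos_right step2 (by positivity)
        _ = (3.38 ^ 9 * sπ) * (r ^ 9 * E ^ 9 * Real.pi ^ 4) := by ring
        _ ≤ (2 ^ 15 * Real.pi) * (r ^ 9 * E ^ 9 * Real.pi ^ 4) := by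
            apply mul_le_mul_of_nonneg_right hnum (by positivity)
        _ = r ^ 9 * E ^ 9 * ((2 * Real.pi) ^ 5 * 2 ^ 10) := by ring
    have hc : E / s2π / 2 < q ^ (0.9:ℝ) :=
      aux_rpow (by positivity) hqpos.le hkey
    have hrpow : q ^ (0.9:ℝ) ≤ p ^ (0.9:ℝ) :=
      Real.rpow_le_rpow hqpos.le hqp (by norm_num)
    linarith
end

section
/- For any x ∈ {−1,1}^k with k odd, the parity Π_{i=1}^k x_i equals sign(Σ_{i=1}^k x_i) evaluated through the piecewise-linear function: Σ_{i=0}^{k} (−1)^{i+1} √k [ReLU(s − (2i−k−1)/√k) − 2·ReLU(s − (2i−k)/√k) + ReLU(s − (2i−k+1)/√k)] where s = (Σ_{i=1}^k x_i)/√k, i.e., this sum of ReLUs computes the parity of x exactly. -/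
/-!
If `m` coordinates of `x` equal `-1`, then `Σ xᵢ = k - 2m` and `Π xᵢ = (-1)^m`. After scaling by
`√k`, the `i`-th bracket is the second difference `ReLU(t+1) - 2 ReLU(t) + ReLU(t-1)` at
`t = 2(k - m - i)`, i.e. the tent `max (1 - |t|) 0` sampled at an even integer: it is `1` for
`i = k - m` and `0` otherwise. Only that term survives, with sign `(-1)^(k-m+1) = (-1)^m`
because `k` is odd.
-/

open Finset

theorem max_add_sub_two_mul_max_add_max_sub {h : ℝ} (hh : 0 ≤ h) (t : ℝ) :
    max (t + h) 0 - 2 * max t 0 + max (t - h) 0 = max (h - |t|) 0 := by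
  rw [abs_eq_max_neg]
  simp only [max_def]
  split_ifs <;> linarith

section SignVector

variable {ι R : Type*} [DecidableEq R] {s : Finset ι} {f : ι → R}

theorem Finset.prod_eq_neg_one_pow_card_filter [CommMonoid R] [HasDistribNeg R]
    (hf : ∀ i ∈ s, f i = 1 ∨ f i = -1) :
    ∏ i ∈ s, f i = (-1) ^ #{i ∈ s | f i = -1} := by
  calc ∏ i ∈ s, f i = ∏ i ∈ s, if f i = -1 then -1 else 1 :=
        prod_congr rfl fun i hi => by rcases hf i hi with h | h <;> simp [h]
    _ = _ := by rw [prod_ite, prod_const, prod_const_one, mul_one]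

theorem Finset.sum_eq_card_sub_two_mul_card_filter [Ring R]
    (hf : ∀ i ∈ s, f i = 1 ∨ f i = -1) :
    ∑ i ∈ s, f i = #s - 2 * #{i ∈ s | f i = -1} := by
  calc ∑ i ∈ s, f i = ∑ i ∈ s, (1 - if f i = -1 then 2 else 0) := by
        refine sum_congr rfl fun i hi => ?_
        by_cases h : f i = -1
        · rw [if_pos h, h]; norm_num
        · rw [if_neg h, (hf i hi).resolve_right h, sub_zero]
    _ = _ := by
      rw [sum_sub_distrib, sum_ite, sum_const, sum_const, sum_const_zero, nsmul_eq_mul,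
        nsmul_eq_mul, mul_one, add_zero, Nat.cast_comm]

end SignVector

theorem sum_range_neg_one_pow_mul_max_one_sub_abs {n k : ℕ} (hn : n ≤ k) :
    ∑ i ∈ range (k + 1), (-1 : ℝ) ^ (i + 1) * max (1 - |2 * ((n : ℝ) - i)|) 0
      = (-1) ^ (n + 1) := by
  rw [sum_eq_single_of_mem n (mem_range.2 (Nat.lt_succ_of_le hn))]
  · simp
  · intro i _ hin
    have : (1 : ℝ) ≤ |(n : ℝ) - i| := by
      exact_mod_cast Int.one_le_abs (sub_ne_zero.2 (by exact_mod_cast hin.symm : (n : ℤ) ≠ i))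
    rw [abs_mul, abs_two, max_eq_right (by linarith), mul_zero]

theorem mul_max_div_sub_div {c : ℝ} (hc : 0 < c) (a b : ℝ) :
    c * max (a / c - b / c) 0 = max (a - b) 0 := by
  rw [mul_max_of_nonneg _ _ hc.le, ← sub_div, mul_div_cancel₀ _ hc.ne', mul_zero]

theorem parity_via_relu_general (k : ℕ) (hk : Odd k) (x : Fin k → ℝ)
    (hx : ∀ i, x i = 1 ∨ x i = -1) :
    ∑ i ∈ Finset.range (k + 1), (-1 : ℝ) ^ (i + 1) * Real.sqrt k *
        (max ((∑ j, x j) / Real.sqrt k - (2 * (i : ℝ) - k - 1) / Real.sqrt k) 0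
          - 2 * max ((∑ j, x j) / Real.sqrt k - (2 * (i : ℝ) - k) / Real.sqrt k) 0
          + max ((∑ j, x j) / Real.sqrt k - (2 * (i : ℝ) - k + 1) / Real.sqrt k) 0)
      = ∏ i, x i := by
  set m := #{i | x i = -1}
  have hm : m ≤ k := (card_filter_le _ _).trans_eq (card_fin k)
  have hsum : ∑ j, x j = 2 * (k - m : ℕ) - k := by
    rw [sum_eq_card_sub_two_mul_card_filter fun i _ => hx i, card_univ, Fintype.card_fin,
      Nat.cast_sub hm]
    ring
  have hsqrt : 0 < Real.sqrt k := Real.sqrt_pos.2 (Nat.cast_pos.2 hk.pos)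
  have hterm : ∀ i : ℕ, (-1 : ℝ) ^ (i + 1) * Real.sqrt k *
        (max ((∑ j, x j) / Real.sqrt k - (2 * (i : ℝ) - k - 1) / Real.sqrt k) 0
          - 2 * max ((∑ j, x j) / Real.sqrt k - (2 * (i : ℝ) - k) / Real.sqrt k) 0
          + max ((∑ j, x j) / Real.sqrt k - (2 * (i : ℝ) - k + 1) / Real.sqrt k) 0)
      = (-1) ^ (i + 1) * max (1 - |2 * (((k - m : ℕ) : ℝ) - i)|) 0 := fun i => by
    rw [mul_assoc, mul_add, mul_sub, mul_left_comm _ 2, mul_max_div_sub_div hsqrt,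
      mul_max_div_sub_div hsqrt, mul_max_div_sub_div hsqrt,
      ← max_add_sub_two_mul_max_add_max_sub zero_le_one, hsum]
    ring_nf
  rw [sum_congr rfl fun i _ => hterm i,
    sum_range_neg_one_pow_mul_max_one_sub_abs (Nat.sub_le k m),
    prod_eq_neg_one_pow_card_filter fun i _ => hx i, neg_one_pow_eq_pow_mod_two,
    neg_one_pow_eq_pow_mod_two (n := m)]
  have hk_mod := Nat.odd_iff.1 hk
  congr 1
  omega

/-- A sum of ReLUs computing the parity exactly: for odd `k` and `x ∈ {−1,1}^k`, with
`s = (Σᵢ xᵢ)/√k`, the alternating sum of hat functions built from triples of ReLUs equals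
the parity `Πᵢ xᵢ`. -/
theorem parity_via_relu (k : ℕ) (hk : Odd k) (hk1 : 1 ≤ k) (x : Fin k → ℝ)
    (hx : ∀ i, x i = 1 ∨ x i = -1) :
    ∑ i ∈ Finset.range (k + 1), (-1 : ℝ) ^ (i + 1) * Real.sqrt k *
        (max ((∑ j, x j) / Real.sqrt k - (2 * (i : ℝ) - k - 1) / Real.sqrt k) 0
          - 2 * max ((∑ j, x j) / Real.sqrt k - (2 * (i : ℝ) - k) / Real.sqrt k) 0
          + max ((∑ j, x j) / Real.sqrt k - (2 * (i : ℝ) - k + 1) / Real.sqrt k) 0)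
      = ∏ i, x i :=
  parity_via_relu_general k hk x hx
end
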